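/- For every τ ∈ ℂ with Re(τ) > 0 and Im(τ) > 0, ∫₀^∞ exp(−e^{πi/4} s/τ) · B₀(e^{πi/4} s) · e^{πi/4} ds = ∫₀^∞ exp(−x/τ) · B₀(x) dx, and both integrals converge absolutely. -/

import Mathlib

open scoped BigOperators
open MeasureTheory

/-- The Borel transform `B₀(ζ) = (κ i/(4π)) · (∏_j sinh(κ√ζ/p_j)) / (√ζ · sinh(κ√ζ)^(n−2))`
of the normalized Ohtsuki series, where `κ = √(2πiP)` and all square roots are principal
branches. -/
noncomputable def borelB (n : ℕ) (p : Fin n → ℤ) (ζ : ℂ) : ℂ :=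
  (2 * (Real.pi : ℂ) * Complex.I * ((∏ i, p i : ℤ) : ℂ)) ^ ((1 : ℂ) / 2) * Complex.I /
      (4 * (Real.pi : ℂ)) *
    (∏ j, Complex.sinh
      ((2 * (Real.pi : ℂ) * Complex.I * ((∏ i, p i : ℤ) : ℂ)) ^ ((1 : ℂ) / 2) *
        ζ ^ ((1 : ℂ) / 2) / (p j : ℂ))) /
    (ζ ^ ((1 : ℂ) / 2) *
      Complex.sinh
        ((2 * (Real.pi : ℂ) * Complex.I * ((∏ i, p i : ℤ) : ℂ)) ^ ((1 : ℂ) / 2) *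
          ζ ^ ((1 : ℂ) / 2)) ^ (n - 2))

/-!
The integrand `f ζ = exp (-ζ / τ) B₀(ζ)` is holomorphic on the closed sector `0 ≤ arg ζ ≤ π/4`
minus the origin and decays like `exp (-c |ζ|)` there. Indeed `κ √ζ` has argument in
`[π/4, 3π/8]`, so `|sinh (κ √ζ)| ≥ Re (κ √ζ) ≥ cos (3π/8) |κ √ζ|`; together with
`|sinh w| ≤ |w| e^{|w|}` in the numerator this gives `|B₀(ζ)| ≲ √|ζ| exp (n |κ| √|ζ|)`, while
`Re (ζ / τ) ≥ c |ζ|` because `Re τ > 0` and `Im τ ≥ 0`. The substitution `ζ = exp z` turns the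
sector into a horizontal strip and the two rays into its boundary lines; Cauchy's theorem on
rectangles, whose vertical sides vanish in the limit by the decay, identifies the two integrals.
-/

open Complex Set Filter
open scoped Real Interval Topology

namespace Complex

theorem exp_add_mul_I_eq (x θ : ℝ) : exp (x + θ * I) = exp (θ * I) * (Real.exp x : ℝ) := by
  rw [exp_add, ofReal_exp, mul_comm]

theorem exp_mul_I_mul_ofReal_eq (θ : ℝ) {s : ℝ} (hs : 0 < s) :
    exp (θ * I) * s = exp (Real.log s + θ * I) := by
  rw [exp_add, ← ofReal_exp, Real.exp_log hs, mul_comm]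

theorem norm_exp_mul_I_mul_ofReal (θ : ℝ) {s : ℝ} (hs : 0 ≤ s) : ‖exp (θ * I) * s‖ = s := by
  rw [norm_mul, norm_exp_ofReal_mul_I, one_mul, norm_real, Real.norm_of_nonneg hs]

theorem exp_cpow_one_half {z : ℂ} (h₁ : -π < z.im) (h₂ : z.im ≤ π) :
    exp z ^ (1 / 2 : ℂ) = exp (z / 2) := by
  rw [cpow_def_of_ne_zero (exp_ne_zero z), log_exp h₁ h₂, mul_one_div]

theorem norm_cpow_one_half (z : ℂ) : ‖z ^ (1 / 2 : ℂ)‖ = √‖z‖ := by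
  rw [show (1 / 2 : ℂ) = ((1 / 2 : ℝ) : ℂ) by push_cast; ring, norm_cpow_real, Real.sqrt_eq_rpow]

theorem norm_sinh_le_mul_exp (z : ℂ) : ‖sinh z‖ ≤ ‖z‖ * Real.exp ‖z‖ := by
  have h₁ := norm_exp_sub_sum_le_norm_mul_exp z 1
  have h₂ := norm_exp_sub_sum_le_norm_mul_exp (-z) 1
  simp only [Finset.range_one, Finset.sum_singleton, pow_zero, Nat.factorial_zero,
    Nat.cast_one, div_one, pow_one, norm_neg] at h₁ h₂
  rw [sinh, show exp z - exp (-z) = (exp z - 1) - (exp (-z) - 1) by ring, norm_div,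
    Complex.norm_two]
  linarith [norm_sub_le (exp z - 1) (exp (-z) - 1)]

theorem re_le_norm_sinh {z : ℂ} (hz : 0 ≤ z.re) : z.re ≤ ‖sinh z‖ := calc
  z.re ≤ Real.sinh z.re := Real.self_le_sinh_iff.mpr hz
  _ = (‖exp z‖ - ‖exp (-z)‖) / 2 := by rw [Real.sinh_eq, norm_exp, norm_exp, neg_re]
  _ ≤ ‖sinh z‖ := by
    rw [sinh, norm_div, Complex.norm_two]
    gcongr
    exact norm_sub_norm_le _ _

end Complex

section Substitution

variable {E : Type*} [NormedAddCommGroup E] [NormedSpace ℝ E]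

theorem integral_exp_smul_comp_exp (g : ℝ → E) :
    ∫ x : ℝ, Real.exp x • g (Real.exp x) = ∫ s in Ioi 0, g s := by
  have h := integral_image_eq_integral_abs_deriv_smul MeasurableSet.univ
    (fun x _ => (Real.hasDerivAt_exp x).hasDerivWithinAt) Real.exp_injective.injOn g
  simp_rw [image_univ, Real.range_exp, setIntegral_univ, abs_of_pos (Real.exp_pos _)] at h
  exact h.symm

theorem integrable_exp_smul_comp_exp_iff (g : ℝ → E) :
    Integrable (fun x : ℝ => Real.exp x • g (Real.exp x)) ↔ IntegrableOn g (Ioi 0) := by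
  have h := integrableOn_image_iff_integrableOn_abs_deriv_smul MeasurableSet.univ
    (fun x _ => (Real.hasDerivAt_exp x).hasDerivWithinAt) Real.exp_injective.injOn g
  simp_rw [image_univ, Real.range_exp, integrableOn_univ, abs_of_pos (Real.exp_pos _)] at h
  exact h.symm

end Substitution

theorem integral_add_mul_I_eq_of_tendsto_vertical {E : Type*} [NormedAddCommGroup E]
    [NormedSpace ℂ E] [CompleteSpace E] {F : ℂ → E} {a b : ℝ}
    (hF : DifferentiableOn ℂ F (univ ×ℂ [[a, b]]))
    (ha : Integrable fun x : ℝ => F (x + a * I)) (hb : Integrable fun x : ℝ => F (x + b * I))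
    (htop : Tendsto (fun R : ℝ => ∫ y in a..b, F (R + y * I)) atTop (𝓝 0))
    (hbot : Tendsto (fun R : ℝ => ∫ y in a..b, F (R + y * I)) atBot (𝓝 0)) :
    ∫ x : ℝ, F (x + a * I) = ∫ x : ℝ, F (x + b * I) := by
  have hrect (R : ℝ) : (∫ x in -R..R, F (x + a * I)) - (∫ x in -R..R, F (x + b * I)) +
      I • (∫ y in a..b, F (R + y * I)) - I • (∫ y in a..b, F (-R + y * I)) = 0 := by
    have hsub : [[(-R + a * I).re, (R + b * I).re]] ×ℂ [[(-R + a * I).im, (R + b * I).im]] ⊆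
        univ ×ℂ [[a, b]] := by
      intro z hz
      simp_all [mem_reProdIm]
    simpa using integral_boundary_rect_eq_zero_of_differentiableOn F _ _ (hF.mono hsub)
  have hlim := (((intervalIntegral_tendsto_integral ha tendsto_neg_atTop_atBot tendsto_id).sub
    (intervalIntegral_tendsto_integral hb tendsto_neg_atTop_atBot tendsto_id)).add
    (htop.const_smul I)).sub ((hbot.comp tendsto_neg_atTop_atBot).const_smul I)
  rw [smul_zero, add_zero, sub_zero] at hlim
  refine sub_eq_zero.mp (tendsto_nhds_unique hlim ?_)
  exact tendsto_const_nhds.congr fun R => by simpa using (hrect R).symm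

theorem tendsto_exp_mul_exp_neg_exp_atTop (C : ℝ) {c : ℝ} (hc : 0 < c) :
    Tendsto (fun R : ℝ => Real.exp R * (C * Real.exp (-c * Real.exp R))) atTop (𝓝 0) := by
  have h := (tendsto_rpow_mul_exp_neg_mul_atTop_nhds_zero 1 c hc).const_mul C
  simp only [Real.rpow_one, mul_zero] at h
  exact (h.comp Real.tendsto_exp_atTop).congr fun R => by simp only [Function.comp_apply]; ring

theorem tendsto_exp_mul_exp_neg_exp_atBot (C c : ℝ) :
    Tendsto (fun R : ℝ => Real.exp R * (C * Real.exp (-c * Real.exp R))) atBot (𝓝 0) := by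
  have h : Continuous fun t : ℝ => t * (C * Real.exp (-c * t)) := by fun_prop
  simpa [Function.comp_def] using (h.tendsto 0).comp Real.tendsto_exp_atBot

section Ray

variable {f : ℂ → ℂ}

theorem integrableOn_Ioi_ray {θ C c : ℝ} (hc : 0 < c)
    (hf : ∀ s : ℝ, 0 < s → ContinuousAt f (exp (θ * I) * s))
    (hbound : ∀ s : ℝ, 0 < s → ‖f (exp (θ * I) * s)‖ ≤ C * Real.exp (-c * s)) :
    IntegrableOn (fun s : ℝ => f (exp (θ * I) * s) * exp (θ * I)) (Ioi 0) := by
  refine Integrable.mono' ((exp_neg_integrableOn_Ioi 0 hc).const_mul C) ?_ ?_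
  · refine ContinuousOn.aestronglyMeasurable (fun s hs => ContinuousAt.continuousWithinAt ?_)
      measurableSet_Ioi
    have hray : ContinuousAt (fun s : ℝ => exp (θ * I) * s) s := by fun_prop
    exact ((hf s hs).comp_of_eq hray rfl).mul continuousAt_const
  · refine (ae_restrict_iff' measurableSet_Ioi).mpr (ae_of_all _ fun s hs => ?_)
    simpa [norm_exp_ofReal_mul_I] using hbound s hs

theorem integral_Ioi_ray_eq_of_sector {θ₁ θ₂ C c : ℝ} (hc : 0 < c)
    (hf : ∀ θ ∈ [[θ₁, θ₂]], ∀ s : ℝ, 0 < s → DifferentiableAt ℂ f (exp (θ * I) * s))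
    (hbound : ∀ θ ∈ [[θ₁, θ₂]], ∀ s : ℝ, 0 < s →
      ‖f (exp (θ * I) * s)‖ ≤ C * Real.exp (-c * s)) :
    ∫ s in Ioi (0:ℝ), f (exp (θ₁ * I) * s) * exp (θ₁ * I) =
      ∫ s in Ioi (0:ℝ), f (exp (θ₂ * I) * s) * exp (θ₂ * I) := by
  set F : ℂ → ℂ := fun z => exp z * f (exp z)
  have hF (x θ : ℝ) :
      F (x + θ * I) = Real.exp x • (f (exp (θ * I) * (Real.exp x : ℝ)) * exp (θ * I)) := by
    simp only [F, exp_add_mul_I_eq, real_smul]; ring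
  have hline (θ : ℝ) :
      ∫ x : ℝ, F (x + θ * I) = ∫ s in Ioi (0:ℝ), f (exp (θ * I) * s) * exp (θ * I) := by
    simp_rw [hF]
    exact integral_exp_smul_comp_exp (fun s : ℝ => f (exp (θ * I) * s) * exp (θ * I))
  have hint {θ : ℝ} (hθ : θ ∈ [[θ₁, θ₂]]) : Integrable fun x : ℝ => F (x + θ * I) := by
    simp_rw [hF]
    exact (integrable_exp_smul_comp_exp_iff _).mpr
      (integrableOn_Ioi_ray hc (fun s hs => (hf θ hθ s hs).continuousAt) (hbound θ hθ))
  have hdiff : DifferentiableOn ℂ F (univ ×ℂ [[θ₁, θ₂]]) := by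
    intro z hz
    have := hf z.im hz.2 (Real.exp z.re) (Real.exp_pos _)
    rw [← exp_add_mul_I_eq, re_add_im] at this
    exact (differentiableAt_exp.mul (this.comp z differentiableAt_exp)).differentiableWithinAt
  have hvert (R : ℝ) : ‖∫ y in θ₁..θ₂, F (R + y * I)‖ ≤
      Real.exp R * (C * Real.exp (-c * Real.exp R)) * |θ₂ - θ₁| := by
    refine intervalIntegral.norm_integral_le_of_norm_le_const fun y hy => ?_
    rw [hF, norm_smul, norm_mul, norm_exp_ofReal_mul_I, mul_one,
      Real.norm_of_nonneg (Real.exp_pos R).le]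
    exact mul_le_mul_of_nonneg_left (hbound y (uIoc_subset_uIcc hy) _ (Real.exp_pos R))
      (Real.exp_pos R).le
  rw [← hline, ← hline]
  refine integral_add_mul_I_eq_of_tendsto_vertical hdiff (hint left_mem_uIcc)
    (hint right_mem_uIcc) (squeeze_zero_norm hvert ?_) (squeeze_zero_norm hvert ?_)
  · simpa using (tendsto_exp_mul_exp_neg_exp_atTop C hc).mul_const |θ₂ - θ₁|
  · simpa using (tendsto_exp_mul_exp_neg_exp_atBot C c).mul_const |θ₂ - θ₁|

end Ray

theorem norm_prod_sinh_div_le {n : ℕ} (hn : 2 ≤ n) {q : Fin n → ℂ} (hq : ∀ j, 1 ≤ ‖q j‖)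
    {κ σ : ℂ} (hκ : κ ≠ 0) (hσ : σ ≠ 0) {c₀ : ℝ} (hc₀ : 0 < c₀)
    (hre : c₀ * ‖κ * σ‖ ≤ (κ * σ).re) :
    ‖κ * I / (4 * π) * (∏ j, sinh (κ * σ / q j)) / (σ * sinh (κ * σ) ^ (n - 2))‖ ≤
      ‖κ‖ ^ 3 / (4 * π * c₀ ^ (n - 2)) * ‖σ‖ * Real.exp (n * ‖κ‖ * ‖σ‖) := by
  set ρ := ‖κ * σ‖ with hρ
  have hρ0 : 0 < ρ := norm_pos_iff.mpr (mul_ne_zero hκ hσ)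
  have hnum : ‖∏ j, sinh (κ * σ / q j)‖ ≤ (ρ * Real.exp ρ) ^ n := by
    rw [norm_prod]
    refine (Finset.prod_le_prod (g := fun _ => ρ * Real.exp ρ) (fun _ _ => norm_nonneg _)
      fun j _ => ?_).trans_eq (by simp)
    have hj : ‖κ * σ / q j‖ ≤ ρ := by
      rw [norm_div]; exact div_le_self hρ0.le (hq j)
    exact (norm_sinh_le_mul_exp _).trans (by gcongr)
  have hden : ‖σ‖ * (c₀ * ρ) ^ (n - 2) ≤ ‖σ * sinh (κ * σ) ^ (n - 2)‖ := by
    rw [norm_mul, norm_pow]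
    gcongr
    exact hre.trans (re_le_norm_sinh (hre.trans' (by positivity)))
  rw [norm_div, norm_mul, norm_div, norm_mul, norm_I, mul_one]
  calc ‖κ‖ / ‖(4 * π : ℂ)‖ * ‖∏ j, sinh (κ * σ / q j)‖ / ‖σ * sinh (κ * σ) ^ (n - 2)‖
      ≤ ‖κ‖ / (4 * π) * (ρ * Real.exp ρ) ^ n / (‖σ‖ * (c₀ * ρ) ^ (n - 2)) := by
        have h4 : ‖(4 * π : ℂ)‖ = 4 * π := by
          rw [norm_mul, Complex.norm_ofNat, norm_real, Real.norm_of_nonneg Real.pi_pos.le]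
        rw [h4]
        gcongr
    _ = _ := by
        obtain ⟨m, rfl⟩ := Nat.exists_eq_add_of_le' hn
        rw [hρ, norm_mul, Nat.add_sub_cancel, mul_pow, ← Real.exp_nat_mul, mul_assoc]
        field_simp
        ring

theorem cos_three_pi_div_eight_pos : 0 < Real.cos (3 * π / 8) :=
  Real.cos_pos_of_mem_Ioo ⟨by linarith [Real.pi_pos], by linarith [Real.pi_pos]⟩

theorem cos_mul_norm_le_re_cpow_mul_cpow {r s θ : ℝ} (hr : 0 < r) (hs : 0 < s)
    (hθ : θ ∈ Icc 0 (π / 4)) :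
    Real.cos (3 * π / 8) * ‖((r : ℂ) * I) ^ (1 / 2 : ℂ) * (exp (θ * I) * s) ^ (1 / 2 : ℂ)‖ ≤
      (((r : ℂ) * I) ^ (1 / 2 : ℂ) * (exp (θ * I) * s) ^ (1 / 2 : ℂ)).re := by
  have hpi := Real.pi_pos
  have hrI : (r : ℂ) * I = exp (Real.log r + (π / 2 : ℝ) * I) := by
    rw [exp_add, ← ofReal_exp, Real.exp_log hr, ofReal_div, ofReal_ofNat, exp_pi_div_two_mul_I]
  have hw : ((r : ℂ) * I) ^ (1 / 2 : ℂ) * (exp (θ * I) * s) ^ (1 / 2 : ℂ) =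
      exp (((Real.log r + Real.log s) / 2 : ℝ) + ((π / 2 + θ) / 2 : ℝ) * I) := by
    rw [hrI, exp_mul_I_mul_ofReal_eq θ hs, exp_cpow_one_half, exp_cpow_one_half, ← exp_add]
    · push_cast; ring_nf
    all_goals simp; linarith [hθ.1, hθ.2]
  rw [hw, exp_re, norm_exp, mul_comm]
  simp only [add_re, add_im, ofReal_re, ofReal_im, mul_re, mul_im, I_re, I_im, mul_zero, mul_one,
    sub_zero, add_zero, zero_add]
  gcongr
  exact Real.cos_le_cos_of_nonneg_of_le_pi (by linarith [hθ.1]) (by linarith) (by linarith [hθ.2])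

theorem mul_exp_mul_sub_mul_sq_le {A c : ℝ} (hc : 0 < c) (u : ℝ) :
    u * Real.exp (A * u - c * u ^ 2) ≤
      Real.exp ((A + 1) ^ 2 / (2 * c)) * Real.exp (-(c / 2) * u ^ 2) := by
  rw [← Real.exp_add]
  calc u * Real.exp (A * u - c * u ^ 2) ≤ Real.exp u * Real.exp (A * u - c * u ^ 2) := by
        gcongr; linarith [Real.add_one_le_exp u]
    _ ≤ _ := by
        rw [← Real.exp_add, Real.exp_le_exp, div_add' _ _ _ (by positivity),
          le_div_iff₀ (by positivity)]
        nlinarith [sq_nonneg (c * u - (A + 1))]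

theorem cos_pi_div_four_mul_div_normSq_le_re {τ : ℂ} (hre : 0 < τ.re) (him : 0 ≤ τ.im) {θ : ℝ}
    (hθ : θ ∈ Icc 0 (π / 4)) :
    Real.cos (π / 4) * τ.re / normSq τ ≤ (exp (θ * I) / τ).re := by
  have hpi := Real.pi_pos
  have hcos : Real.cos (π / 4) ≤ Real.cos θ :=
    Real.cos_le_cos_of_nonneg_of_le_pi hθ.1 (by linarith) hθ.2
  have hsin : 0 ≤ Real.sin θ := Real.sin_nonneg_of_nonneg_of_le_pi hθ.1 (by linarith [hθ.2])
  rw [div_re, exp_ofReal_mul_I_re, exp_ofReal_mul_I_im]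
  have hτ := normSq_pos.mpr (fun h : τ = 0 => by simp [h] at hre)
  rw [← add_div]
  gcongr
  nlinarith [mul_nonneg hsin him, mul_le_mul_of_nonneg_right hcos hre.le]

theorem norm_exp_neg_exp_mul_I_mul_div_le {τ : ℂ} (hre : 0 < τ.re) (him : 0 ≤ τ.im) {s θ : ℝ}
    (hs : 0 ≤ s) (hθ : θ ∈ Icc 0 (π / 4)) :
    ‖exp (-(exp (θ * I) * s) / τ)‖ ≤ Real.exp (-(Real.cos (π / 4) * τ.re / normSq τ) * s) := by
  rw [norm_exp, Real.exp_le_exp, show -(exp (θ * I) * s) / τ = -(s * (exp (θ * I) / τ)) by ring,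
    neg_re, re_ofReal_mul, neg_mul, neg_le_neg_iff, mul_comm]
  exact mul_le_mul_of_nonneg_left (cos_pi_div_four_mul_div_normSq_le_re hre him hθ) hs

section Borel

variable {n : ℕ} {p : Fin n → ℤ}

noncomputable def borelKappa (n : ℕ) (p : Fin n → ℤ) : ℂ :=
  (2 * (π : ℂ) * I * ((∏ i, p i : ℤ) : ℂ)) ^ (1 / 2 : ℂ)

theorem borelB_eq (ζ : ℂ) : borelB n p ζ =
    borelKappa n p * I / (4 * π) * (∏ j, sinh (borelKappa n p * ζ ^ (1 / 2 : ℂ) / p j)) /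
      (ζ ^ (1 / 2 : ℂ) * sinh (borelKappa n p * ζ ^ (1 / 2 : ℂ)) ^ (n - 2)) :=
  rfl

theorem borelKappa_eq :
    borelKappa n p = (((2 * π * ∏ i, (p i : ℝ) : ℝ) : ℂ) * I) ^ (1 / 2 : ℂ) := by
  rw [borelKappa]; push_cast; ring_nf

theorem two_pi_mul_prod_pos (hp : ∀ j, 2 ≤ p j) : 0 < 2 * π * ∏ i, (p i : ℝ) := by
  have := Finset.prod_pos fun i (_ : i ∈ Finset.univ) =>
    (by exact_mod_cast (hp i).trans_lt' two_pos : (0 : ℝ) < p i)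
  positivity

theorem borelKappa_ne_zero (hp : ∀ j, 2 ≤ p j) : borelKappa n p ≠ 0 := by
  rw [← norm_pos_iff, borelKappa_eq, norm_cpow_one_half, Real.sqrt_pos, norm_mul, norm_I,
    mul_one, norm_pos_iff, ofReal_ne_zero]
  exact (two_pi_mul_prod_pos hp).ne'

theorem cos_mul_norm_le_re_borelKappa_mul (hp : ∀ j, 2 ≤ p j) {s θ : ℝ} (hs : 0 < s)
    (hθ : θ ∈ Icc 0 (π / 4)) :
    Real.cos (3 * π / 8) * ‖borelKappa n p * (exp (θ * I) * s) ^ (1 / 2 : ℂ)‖ ≤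
      (borelKappa n p * (exp (θ * I) * s) ^ (1 / 2 : ℂ)).re := by
  rw [borelKappa_eq]
  exact cos_mul_norm_le_re_cpow_mul_cpow (two_pi_mul_prod_pos hp) hs hθ

theorem norm_borelB_exp_mul_I_le (hn : 2 ≤ n) (hp : ∀ j, 2 ≤ p j) {s θ : ℝ} (hs : 0 < s)
    (hθ : θ ∈ Icc 0 (π / 4)) :
    ‖borelB n p (exp (θ * I) * s)‖ ≤
      ‖borelKappa n p‖ ^ 3 / (4 * π * Real.cos (3 * π / 8) ^ (n - 2)) * √s *
        Real.exp (n * ‖borelKappa n p‖ * √s) := by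
  have hσ : ‖(exp (θ * I) * s) ^ (1 / 2 : ℂ)‖ = √s := by
    rw [norm_cpow_one_half, norm_exp_mul_I_mul_ofReal θ hs.le]
  have hq (j : Fin n) : 1 ≤ ‖(p j : ℂ)‖ := by
    rw [norm_intCast]; exact_mod_cast (hp j).trans' one_le_two |>.trans (le_abs_self _)
  rw [borelB_eq, ← hσ]
  refine norm_prod_sinh_div_le hn hq (borelKappa_ne_zero hp) ?_ cos_three_pi_div_eight_pos
    (cos_mul_norm_le_re_borelKappa_mul hp hs hθ)
  rw [← norm_pos_iff, hσ]
  exact Real.sqrt_pos.mpr hs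

theorem differentiableAt_borelB {ζ : ℂ} (hζ : ζ ∈ slitPlane)
    (hsinh : sinh (borelKappa n p * ζ ^ (1 / 2 : ℂ)) ≠ 0) :
    DifferentiableAt ℂ (borelB n p) ζ := by
  have hsqrt : DifferentiableAt ℂ (fun z : ℂ => z ^ (1 / 2 : ℂ)) ζ :=
    differentiableAt_id.cpow (differentiableAt_const _) hζ
  have hσ : ζ ^ (1 / 2 : ℂ) ≠ 0 := by simp [cpow_eq_zero_iff, slitPlane_ne_zero hζ]
  have hw := (differentiableAt_const (borelKappa n p)).mul hsqrt
  exact ((differentiableAt_const _).mul (DifferentiableAt.fun_finsetProd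
    fun j _ => (hw.div_const _).csinh)).div (hsqrt.mul (hw.csinh.pow _))
    (mul_ne_zero hσ (pow_ne_zero _ hsinh))

theorem differentiableAt_borelB_exp_mul_I (hp : ∀ j, 2 ≤ p j) {s θ : ℝ} (hs : 0 < s)
    (hθ : θ ∈ Icc 0 (π / 4)) : DifferentiableAt ℂ (borelB n p) (exp (θ * I) * s) := by
  have hpi := Real.pi_pos
  refine differentiableAt_borelB (mem_slitPlane_iff.mpr (Or.inl ?_)) ?_
  · simpa using mul_pos (Real.cos_pos_of_mem_Ioo ⟨by linarith [hθ.1], by linarith [hθ.2]⟩) hs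
  set w := borelKappa n p * (exp (θ * I) * s) ^ (1 / 2 : ℂ)
  have hw : 0 < ‖w‖ := by
    rw [norm_mul, norm_cpow_one_half, norm_exp_mul_I_mul_ofReal θ hs.le]
    exact mul_pos (norm_pos_iff.mpr (borelKappa_ne_zero hp)) (by positivity)
  have hre : 0 < w.re := (cos_mul_norm_le_re_borelKappa_mul hp hs hθ).trans_lt'
    (mul_pos cos_three_pi_div_eight_pos hw)
  exact norm_pos_iff.mp (hre.trans_le (re_le_norm_sinh hre.le))

theorem exists_norm_exp_neg_div_mul_borelB_le (hn : 2 ≤ n) (hp : ∀ j, 2 ≤ p j) {τ : ℂ}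
    (hre : 0 < τ.re) (him : 0 ≤ τ.im) :
    ∃ C c : ℝ, 0 < c ∧ ∀ θ ∈ Icc 0 (π / 4), ∀ s : ℝ, 0 < s →
      ‖exp (-(exp (θ * I) * s) / τ) * borelB n p (exp (θ * I) * s)‖ ≤ C * Real.exp (-c * s) := by
  set c := Real.cos (π / 4) * τ.re / normSq τ
  have hc : 0 < c := by
    have hcos : 0 < Real.cos (π / 4) := by rw [Real.cos_pi_div_four]; positivity
    exact div_pos (mul_pos hcos hre) (normSq_pos.mpr fun h => by simp [h] at hre)
  set K := ‖borelKappa n p‖ ^ 3 / (4 * π * Real.cos (3 * π / 8) ^ (n - 2))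
  have hK : 0 ≤ K := by have := cos_three_pi_div_eight_pos; positivity
  set A := n * ‖borelKappa n p‖
  refine ⟨K * Real.exp ((A + 1) ^ 2 / (2 * c)), c / 2, half_pos hc, fun θ hθ s hs => ?_⟩
  have hsq : √s ^ 2 = s := Real.sq_sqrt hs.le
  calc ‖exp (-(exp (θ * I) * s) / τ) * borelB n p (exp (θ * I) * s)‖
      ≤ Real.exp (-c * s) * (K * √s * Real.exp (A * √s)) := by
        rw [norm_mul]
        exact mul_le_mul (norm_exp_neg_exp_mul_I_mul_div_le hre him hs.le hθ)
          (norm_borelB_exp_mul_I_le hn hp hs hθ) (norm_nonneg _) (Real.exp_pos _).le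
    _ = K * (√s * Real.exp (A * √s - c * √s ^ 2)) := by
        rw [hsq, sub_eq_add_neg, Real.exp_add]; ring_nf
    _ ≤ K * (Real.exp ((A + 1) ^ 2 / (2 * c)) * Real.exp (-(c / 2) * √s ^ 2)) :=
        mul_le_mul_of_nonneg_left (mul_exp_mul_sub_mul_sq_le hc _) hK
    _ = _ := by rw [hsq]; ring

end Borel

theorem statement15_general (n : ℕ) (hn : 3 ≤ n) (p : Fin n → ℤ)
    (hp2 : ∀ j, 2 ≤ p j)
    (τ : ℂ) (hre : 0 < τ.re) (him : 0 < τ.im) :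
    MeasureTheory.IntegrableOn (fun s : ℝ =>
      Complex.exp (-(Complex.exp ((Real.pi : ℂ) * Complex.I / 4)) * (s : ℂ) / τ) *
        borelB n p (Complex.exp ((Real.pi : ℂ) * Complex.I / 4) * (s : ℂ)) *
        Complex.exp ((Real.pi : ℂ) * Complex.I / 4)) (Set.Ioi 0) ∧
    MeasureTheory.IntegrableOn (fun x : ℝ =>
      Complex.exp (-(x : ℂ) / τ) * borelB n p (x : ℂ)) (Set.Ioi 0) ∧
    (∫ s in Set.Ioi (0 : ℝ),
        Complex.exp (-(Complex.exp ((Real.pi : ℂ) * Complex.I / 4)) * (s : ℂ) / τ) *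
          borelB n p (Complex.exp ((Real.pi : ℂ) * Complex.I / 4) * (s : ℂ)) *
          Complex.exp ((Real.pi : ℂ) * Complex.I / 4)) =
      ∫ x in Set.Ioi (0 : ℝ), Complex.exp (-(x : ℂ) / τ) * borelB n p (x : ℂ) := by
  set f : ℂ → ℂ := fun ζ => exp (-ζ / τ) * borelB n p ζ
  have hπ4 : exp (π * I / 4) = exp ((π / 4 : ℝ) * I) := by push_cast; ring_nf
  have hray : (fun s : ℝ => exp (-(exp (π * I / 4)) * s / τ) * borelB n p (exp (π * I / 4) * s) *
      exp (π * I / 4)) = fun s : ℝ => f (exp ((π / 4 : ℝ) * I) * s) * exp ((π / 4 : ℝ) * I) := by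
    simp only [f, hπ4, neg_mul]
  have hreal : (fun x : ℝ => exp (-(x : ℂ) / τ) * borelB n p x) =
      fun s : ℝ => f (exp ((0 : ℝ) * I) * s) * exp ((0 : ℝ) * I) := by
    simp [f]
  obtain ⟨C, c, hc, hbound⟩ := exists_norm_exp_neg_div_mul_borelB_le (by omega) hp2 hre him.le
  have hdiff (θ : ℝ) (hθ : θ ∈ Icc 0 (π / 4)) (s : ℝ) (hs : 0 < s) :
      DifferentiableAt ℂ f (exp (θ * I) * s) :=
    (differentiableAt_id.neg.div_const τ).cexp.mul (differentiableAt_borelB_exp_mul_I hp2 hs hθ)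
  have hint (θ : ℝ) (hθ : θ ∈ Icc 0 (π / 4)) :
      IntegrableOn (fun s : ℝ => f (exp (θ * I) * s) * exp (θ * I)) (Ioi 0) :=
    integrableOn_Ioi_ray hc (fun s hs => (hdiff θ hθ s hs).continuousAt) (hbound θ hθ)
  have hsector : [[0, π / 4]] = Icc 0 (π / 4) := uIcc_of_le (by positivity)
  rw [hray, hreal]
  exact ⟨hint _ (right_mem_Icc.mpr (by positivity)), hint _ (left_mem_Icc.mpr (by positivity)),
    (integral_Ioi_ray_eq_of_sector hc (hsector ▸ hdiff) (hsector ▸ hbound)).symm⟩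

theorem statement15 (n : ℕ) (hn : 3 ≤ n) (p : Fin n → ℤ)
    (hp2 : ∀ j, 2 ≤ p j)
    (hpcop : ∀ i j : Fin n, i ≠ j → IsCoprime (p i) (p j))
    (τ : ℂ) (hre : 0 < τ.re) (him : 0 < τ.im) :
    MeasureTheory.IntegrableOn (fun s : ℝ =>
      Complex.exp (-(Complex.exp ((Real.pi : ℂ) * Complex.I / 4)) * (s : ℂ) / τ) *
        borelB n p (Complex.exp ((Real.pi : ℂ) * Complex.I / 4) * (s : ℂ)) *
        Complex.exp ((Real.pi : ℂ) * Complex.I / 4)) (Set.Ioi 0) ∧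
    MeasureTheory.IntegrableOn (fun x : ℝ =>
      Complex.exp (-(x : ℂ) / τ) * borelB n p (x : ℂ)) (Set.Ioi 0) ∧
    (∫ s in Set.Ioi (0 : ℝ),
        Complex.exp (-(Complex.exp ((Real.pi : ℂ) * Complex.I / 4)) * (s : ℂ) / τ) *
          borelB n p (Complex.exp ((Real.pi : ℂ) * Complex.I / 4) * (s : ℂ)) *
          Complex.exp ((Real.pi : ℂ) * Complex.I / 4)) =
      ∫ x in Set.Ioi (0 : ℝ), Complex.exp (-(x : ℂ) / τ) * borelB n p (x : ℂ) :=
  statement15_general n hn p hp2 τ hre him
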